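/- arXiv:1406.6603 — 2 statements merged into one kernel-verified Lean document; each statement's English description precedes it below -/
import Mathlib

section
/- Let p be a positive integer, let Ω ⊆ ℝ^p be a nonempty closed convex set, and let f : ℝ^p → ℝ be continuously differentiable. Fix parameters β, γ ∈ (0,1), 0 < α_min ≤ α_max and 0 < L_min ≤ L_max. Let (x^(k)), (z^(k)) be sequences in ℝ^p, (α_k) a sequence in [α_min, α_max], (d^(k)) a sequence of vectors in ℝ^p with L_min ≤ d^(k)_i ≤ L_max for all i, and (λ_k) a sequence in (0,1], such that: x^(0) ∈ Ω; for every k, z^(k) is the point of Ω minimizing y ↦ Σ_i (y_i − w^(k)_i)²/d^(k)_i over Ω, where w^(k)_i = x^(k)_i − α_k d^(k)_i ∂_i f(x^(k)); for every k, writing Δ^(k) = z^(k) − x^(k), the Armijo condition f(x^(k) + λ_k Δ^(k)) ≤ f(x^(k)) + β λ_k ∇f(x^(k))·Δ^(k) holds, and moreover either λ_k = 1 or f(x^(k) + (λ_k/γ) Δ^(k)) > f(x^(k)) + β (λ_k/γ) ∇f(x^(k))·Δ^(k) (i.e. λ_k is produced by backtracking with reduction factor γ); and x^(k+1) = x^(k)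 + λ_k Δ^(k). Then every accumulation point x* of the sequence (x^(k)) is a constrained stationary point, i.e. ∇f(x*)·(y − x*) ≥ 0 for all y ∈ Ω. -/
/-!
Testing the variational inequality of the scaled projection at `y = x^(k)` shows that
`Δ^(k) = z^(k) - x^(k)` is a descent direction with
`‖Δ^(k)‖² ≤ α_max L_max (-∇f(x^(k)) · Δ^(k))`. Hence `f(x^(k))` decreases to `f(x*)` and
`λ_k ∇f(x^(k)) · Δ^(k) → 0`. Along a subsequence with `x^(k) → x*`, `Δ^(k) → Δ*` and
`λ_k → λ*`, either `λ* > 0`, or `λ* = 0` and the Armijo tests failing at `λ_k / γ` give, by the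
mean value theorem, `β ∇f(x*) · Δ* ≤ ∇f(x*) · Δ*`. Either way `∇f(x*) · Δ* ≥ 0`, which forces
`Δ* = 0`, and the variational inequality passes to the limit as stationarity of `x*`.
-/

open Filter Topology Set
open scoped RealInnerProductSpace

lemma ContDiff.continuous_gradient {F : Type*} [NormedAddCommGroup F] [InnerProductSpace ℝ F]
    [CompleteSpace F] {f : F → ℝ} (hf : ContDiff ℝ 1 f) : Continuous (gradient f) :=
  (InnerProductSpace.toDual ℝ F).symm.continuous.comp (hf.continuous_fderiv one_ne_zero)

lemma nonneg_of_forall_nonneg_add_mul {S T : ℝ} (h : ∀ t ∈ Ioc (0 : ℝ) 1, 0 ≤ S + t * T) :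
    0 ≤ S := by
  have hlim : Tendsto (fun t => S + t * T) (𝓝[>] 0) (𝓝 S) := by
    have hcont : Continuous fun t : ℝ => S + t * T := by fun_prop
    simpa using (hcont.tendsto 0).mono_left nhdsWithin_le_nhds
  exact ge_of_tendsto hlim (mem_of_superset (Ioc_mem_nhdsGT zero_lt_one) h)

lemma tendsto_zero_of_le_add_mul_of_mapClusterPt {X : Type*} [TopologicalSpace X]
    [FirstCountableTopology X] {f : X → ℝ} (hf : Continuous f) {x : ℕ → X} {a : ℕ → ℝ} {β : ℝ}
    (hβ : 0 < β) (ha : ∀ k, a k ≤ 0) (hstep : ∀ k, f (x (k + 1)) ≤ f (x k) + β * a k) {x₀ : X}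
    (hacc : MapClusterPt x₀ atTop x) : Tendsto a atTop (𝓝 0) := by
  have hdecr : ∀ k, f (x (k + 1)) ≤ f (x k) := fun k =>
    (hstep k).trans (add_le_of_nonpos_right (mul_nonpos_of_nonneg_of_nonpos hβ.le (ha k)))
  obtain ⟨φ, hφ, hxφ⟩ := hacc.tendsto_subseq
  have hflim : Tendsto (fun k => f (x k)) atTop (𝓝 (f x₀)) :=
    (tendsto_iff_tendsto_subseq_of_antitone (antitone_nat_of_succ_le hdecr)
      hφ.tendsto_atTop).2 ((hf.tendsto x₀).comp hxφ)
  have hdiff : Tendsto (fun k => f (x (k + 1)) - f (x k)) atTop (𝓝 0) := by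
    simpa using (hflim.comp (tendsto_add_atTop_nat 1)).sub hflim
  have hβa : Tendsto (fun k => β * a k) atTop (𝓝 0) :=
    tendsto_of_tendsto_of_tendsto_of_le_of_le hdiff tendsto_const_nhds
      (fun k => by linarith [hstep k]) (fun k => mul_nonpos_of_nonneg_of_nonpos hβ.le (ha k))
  simpa [hβ.ne'] using hβa.const_mul β⁻¹

namespace EuclideanSpace

variable {ι : Type*} [Fintype ι]

lemma sum_mul_sub_eq_inner (u a b : EuclideanSpace ℝ ι) :
    ∑ i, u i * (a i - b i) = ⟪u, a - b⟫ := by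
  simp [PiLp.inner_apply, mul_comm]

lemma norm_sq_le_mul_sum_sq_div {d : ι → ℝ} {L : ℝ} (hd : ∀ i, 0 < d i) (hdL : ∀ i, d i ≤ L)
    (v : EuclideanSpace ℝ ι) : ‖v‖ ^ 2 ≤ L * ∑ i, v i ^ 2 / d i := by
  rw [EuclideanSpace.norm_sq_eq, Finset.mul_sum]
  refine Finset.sum_le_sum fun i _ => ?_
  calc ‖v i‖ ^ 2 = d i * (v i ^ 2 / d i) := by
        rw [Real.norm_eq_abs, sq_abs, mul_div_cancel₀ _ (hd i).ne']
    _ ≤ L * (v i ^ 2 / d i) := mul_le_mul_of_nonneg_right (hdL i) (by have := hd i; positivity)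

lemma abs_sum_mul_div_le {d : ι → ℝ} {L : ℝ} (hL : 0 < L) (hLd : ∀ i, L ≤ d i)
    (u v : EuclideanSpace ℝ ι) : |∑ i, u i * v i / d i| ≤ ‖u‖ * ‖v‖ / L := by
  calc |∑ i, u i * v i / d i| ≤ ∑ i, |u i| * |v i| / L := by
        refine (Finset.abs_sum_le_sum_abs _ _).trans (Finset.sum_le_sum fun i _ => ?_)
        rw [abs_div, abs_mul, abs_of_pos (hL.trans_le (hLd i))]
        exact div_le_div_of_nonneg_left (by positivity) hL (hLd i)
    _ = (∑ i, |u i| * |v i|) / L := (Finset.sum_div ..).symm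
    _ ≤ ‖u‖ * ‖v‖ / L := by
        gcongr
        simpa [EuclideanSpace.norm_eq, sq_abs] using
          Real.sum_mul_le_sqrt_mul_sqrt Finset.univ (fun i => |u i|) (fun i => |v i|)

end EuclideanSpace

section ScaledProjection

variable {ι : Type*} [Fintype ι] {Ω : Set (EuclideanSpace ℝ ι)} {d : ι → ℝ}

lemma Convex.scaledProj_variational_ineq (hΩ : Convex ℝ Ω) (hd : ∀ i, 0 < d i) {w : ι → ℝ}
    {z : EuclideanSpace ℝ ι} (hz : z ∈ Ω)
    (hmin : ∀ y ∈ Ω, ∑ i, (z i - w i) ^ 2 / d i ≤ ∑ i, (y i - w i) ^ 2 / d i)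
    {y : EuclideanSpace ℝ ι} (hy : y ∈ Ω) : 0 ≤ ∑ i, (z i - w i) * (y i - z i) / d i := by
  set S := ∑ i, (z i - w i) * (y i - z i) / d i
  set T := ∑ i, (y i - z i) ^ 2 / d i
  suffices h : ∀ t ∈ Ioc (0 : ℝ) 1, 0 ≤ 2 * S + t * T by
    linarith [nonneg_of_forall_nonneg_add_mul h]
  rintro t ⟨ht0, ht1⟩
  have hexpand : ∑ i, ((z + t • (y - z)) i - w i) ^ 2 / d i
      = ∑ i, (z i - w i) ^ 2 / d i + t * (2 * S + t * T) := by
    simp only [S, T, Finset.mul_sum, ← Finset.sum_add_distrib]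
    refine Finset.sum_congr rfl fun i _ => ?_
    have := (hd i).ne'
    simp only [PiLp.add_apply, PiLp.smul_apply, PiLp.sub_apply, smul_eq_mul]
    field_simp
    ring
  have hle := hmin _ (hΩ.add_smul_sub_mem hz hy ⟨ht0.le, ht1⟩)
  rw [hexpand, le_add_iff_nonneg_right] at hle
  exact nonneg_of_mul_nonneg_right hle ht0

lemma Convex.sgp_variational_ineq (hΩ : Convex ℝ Ω) (hd : ∀ i, 0 < d i)
    {x z g : EuclideanSpace ℝ ι} {α : ℝ} (hz : z ∈ Ω)
    (hmin : ∀ y ∈ Ω, ∑ i, (z i - (x i - α * d i * g i)) ^ 2 / d i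
      ≤ ∑ i, (y i - (x i - α * d i * g i)) ^ 2 / d i)
    {y : EuclideanSpace ℝ ι} (hy : y ∈ Ω) :
    0 ≤ ∑ i, (z i - x i) * (y i - z i) / d i + α * ⟪g, y - z⟫ := by
  rw [← EuclideanSpace.sum_mul_sub_eq_inner, Finset.mul_sum, ← Finset.sum_add_distrib]
  convert hΩ.scaledProj_variational_ineq hd hz hmin hy using 2 with i
  have := (hd i).ne'
  field_simp
  ring

variable {x z g : EuclideanSpace ℝ ι} {α : ℝ}

lemma norm_sq_le_of_sgp_variational_ineq
    (hvi : ∀ y ∈ Ω, 0 ≤ ∑ i, (z i - x i) * (y i - z i) / d i + α * ⟪g, y - z⟫)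
    (hx : x ∈ Ω) (hd : ∀ i, 0 < d i) {L A : ℝ} (hdL : ∀ i, d i ≤ L) (hL : 0 ≤ L)
    (hα : 0 < α) (hαA : α ≤ A) : ‖z - x‖ ^ 2 ≤ A * L * -⟪g, z - x⟫ := by
  have hsum : ∑ i, (z - x) i ^ 2 / d i ≤ α * -⟪g, z - x⟫ := by
    have h := hvi x hx
    rw [← neg_sub z x, inner_neg_right] at h
    have hsq : ∑ i, (z - x) i ^ 2 / d i = -∑ i, (z i - x i) * (x i - z i) / d i := by
      rw [← Finset.sum_neg_distrib]
      refine Finset.sum_congr rfl fun i _ => ?_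
      rw [PiLp.sub_apply]
      ring
    linarith
  have hG : 0 ≤ -⟪g, z - x⟫ := by
    have : 0 ≤ ∑ i, (z - x) i ^ 2 / d i :=
      Finset.sum_nonneg fun i _ => div_nonneg (sq_nonneg _) (hd i).le
    exact nonneg_of_mul_nonneg_right (this.trans hsum) hα
  calc ‖z - x‖ ^ 2 ≤ L * ∑ i, (z - x) i ^ 2 / d i :=
        EuclideanSpace.norm_sq_le_mul_sum_sq_div hd hdL _
    _ ≤ L * (α * -⟪g, z - x⟫) := mul_le_mul_of_nonneg_left hsum hL
    _ ≤ A * L * -⟪g, z - x⟫ := by nlinarith [mul_le_mul_of_nonneg_left hαA (mul_nonneg hL hG)]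

lemma neg_le_inner_of_sgp_variational_ineq
    (hvi : ∀ y ∈ Ω, 0 ≤ ∑ i, (z i - x i) * (y i - z i) / d i + α * ⟪g, y - z⟫)
    {y : EuclideanSpace ℝ ι} (hy : y ∈ Ω) {Lmin αmin : ℝ} (hLmin : 0 < Lmin)
    (hd : ∀ i, Lmin ≤ d i) (hαmin : 0 < αmin) (hα : αmin ≤ α) :
    -(‖z - x‖ * ‖y - z‖ / (αmin * Lmin)) ≤ ⟪g, y - z⟫ := by
  have hR := EuclideanSpace.abs_sum_mul_div_le hLmin hd (z - x) (y - z)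
  simp only [PiLp.sub_apply] at hR
  have h := hvi y hy
  rcases le_or_gt 0 ⟪g, y - z⟫ with ht | ht
  · exact (neg_nonpos.2 (by positivity)).trans ht
  · rw [mul_comm αmin, ← div_div, neg_le, le_div_iff₀ hαmin]
    nlinarith [mul_le_mul_of_nonneg_left hα (neg_nonneg.2 ht.le),
      le_abs_self (∑ i, (z i - x i) * (y i - z i) / d i)]

end ScaledProjection

section LineSearch

variable {F : Type*} [NormedAddCommGroup F] [InnerProductSpace ℝ F] {f : F → ℝ}

lemma norm_le_mul_norm_of_sq_le_mul_neg_inner {g v : F} {C : ℝ} (hC : 0 ≤ C)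
    (h : ‖v‖ ^ 2 ≤ C * -⟪g, v⟫) : ‖v‖ ≤ C * ‖g‖ := by
  have hcs := neg_le_of_abs_le (abs_real_inner_le_norm g v)
  nlinarith [norm_nonneg v, mul_nonneg hC (norm_nonneg g)]

lemma exists_lt_inner_gradient_of_lt [CompleteSpace F] (hf : Differentiable ℝ f) {x v : F}
    {s m : ℝ} (hs : 0 < s) (h : f x + s * m < f (x + s • v)) :
    ∃ c ∈ Ioo 0 s, m < ⟪gradient f (x + c • v), v⟫ := by
  have hline : ∀ t : ℝ, HasDerivAt (fun t => f (x + t • v)) ⟪gradient f (x + t • v), v⟫ t := by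
    intro t
    rw [inner_gradient_left]
    exact (hf _).hasFDerivAt.comp_hasDerivAt t
      (by simpa using ((hasDerivAt_id t).smul_const v).const_add x)
  obtain ⟨c, hc, hslope⟩ := exists_hasDerivAt_eq_slope (fun t => f (x + t • v)) _ hs
    (fun t _ => (hline t).continuousAt.continuousWithinAt) fun t _ => hline t
  refine ⟨c, hc, ?_⟩
  rw [hslope, lt_div_iff₀ (by simpa using hs)]
  simp only [zero_smul, add_zero, sub_zero]
  linarith

lemma inner_gradient_nonneg_of_armijo_fails [CompleteSpace F] (hf : ContDiff ℝ 1 f) {β : ℝ}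
    (hβ : β < 1) {κ : Type*} {l : Filter κ} [l.NeBot] {x v : κ → F} {s : κ → ℝ} {x₀ v₀ : F}
    (hx : Tendsto x l (𝓝 x₀)) (hv : Tendsto v l (𝓝 v₀)) (hs : Tendsto s l (𝓝 0))
    (hfail : ∀ᶠ n in l,
      0 < s n ∧ f (x n) + β * s n * ⟪gradient f (x n), v n⟫ < f (x n + s n • v n)) :
    0 ≤ ⟪gradient f x₀, v₀⟫ := by
  have hmvt : ∀ n, (0 < s n ∧ f (x n) + β * s n * ⟪gradient f (x n), v n⟫ < f (x n + s n • v n))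
      → ∃ c ∈ Ioo 0 (s n), β * ⟪gradient f (x n), v n⟫ < ⟪gradient f (x n + c • v n), v n⟫ :=
    fun n hn => exists_lt_inner_gradient_of_lt (hf.differentiable one_ne_zero) hn.1
      (by linarith [hn.2])
  choose! c hc hlt using hmvt
  have hc0 : Tendsto c l (𝓝 0) :=
    tendsto_of_tendsto_of_tendsto_of_le_of_le' tendsto_const_nhds hs
      (hfail.mono fun n hn => (hc n hn).1.le) (hfail.mono fun n hn => (hc n hn).2.le)
  have hg := hf.continuous_gradient.tendsto
  have hlim : Tendsto (fun n => ⟪gradient f (x n + c n • v n), v n⟫) l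
      (𝓝 ⟪gradient f x₀, v₀⟫) := by
    refine ((hg x₀).comp ?_).inner hv
    simpa using hx.add (hc0.smul hv)
  have hβle : β * ⟪gradient f x₀, v₀⟫ ≤ ⟪gradient f x₀, v₀⟫ :=
    le_of_tendsto_of_tendsto (((hg x₀).comp hx).inner hv |>.const_mul β) hlim
      (hfail.mono fun n hn => (hlt n hn).le)
  nlinarith

lemma inner_gradient_nonneg_of_backtracking [CompleteSpace F] (hf : ContDiff ℝ 1 f) {β γ : ℝ}
    (hβ : β < 1) (hγ : 0 < γ) {κ : Type*} {l : Filter κ} [l.NeBot] {x v : κ → F}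
    {lam : κ → ℝ} {x₀ v₀ : F} {lam₀ : ℝ} (hx : Tendsto x l (𝓝 x₀)) (hv : Tendsto v l (𝓝 v₀))
    (hlam : Tendsto lam l (𝓝 lam₀)) (hlam0 : ∀ n, 0 < lam n)
    (hlamG : Tendsto (fun n => lam n * ⟪gradient f (x n), v n⟫) l (𝓝 0))
    (hback : ∀ n, lam n = 1 ∨ f (x n + (lam n / γ) • v n) >
      f (x n) + β * (lam n / γ) * ⟪gradient f (x n), v n⟫) :
    0 ≤ ⟪gradient f x₀, v₀⟫ := by
  have hG : Tendsto (fun n => ⟪gradient f (x n), v n⟫) l (𝓝 ⟪gradient f x₀, v₀⟫) :=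
    ((hf.continuous_gradient.tendsto x₀).comp hx).inner hv
  rcases eq_or_ne lam₀ 0 with rfl | hlam₀
  · refine inner_gradient_nonneg_of_armijo_fails hf hβ hx hv (by simpa using hlam.div_const γ) ?_
    filter_upwards [hlam.eventually_lt_const one_pos] with n hn
    exact ⟨div_pos (hlam0 n) hγ, (hback n).resolve_left hn.ne⟩
  · have hG0 : Tendsto (fun n => ⟪gradient f (x n), v n⟫) l (𝓝 0) := by
      refine (zero_div lam₀ ▸ hlamG.div hlam hlam₀).congr fun n => ?_
      exact mul_div_cancel_left₀ _ (hlam0 n).ne'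
    exact (tendsto_nhds_unique hG hG0).ge

theorem exists_subseq_tendsto_of_armijo_backtracking [ProperSpace F] (hf : ContDiff ℝ 1 f)
    {β γ C : ℝ} (hβ : β ∈ Ioo 0 1) (hγ : 0 < γ) (hC : 0 < C) {x v : ℕ → F} {lam : ℕ → ℝ}
    (hlam : ∀ k, lam k ∈ Ioc 0 1)
    (hdesc : ∀ k, ‖v k‖ ^ 2 ≤ C * -⟪gradient f (x k), v k⟫)
    (harmijo : ∀ k, f (x (k + 1)) ≤ f (x k) + β * lam k * ⟪gradient f (x k), v k⟫)
    (hback : ∀ k, lam k = 1 ∨ f (x k + (lam k / γ) • v k) >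
      f (x k) + β * (lam k / γ) * ⟪gradient f (x k), v k⟫)
    {x₀ : F} (hacc : MapClusterPt x₀ atTop x) :
    ∃ ψ : ℕ → ℕ, StrictMono ψ ∧ Tendsto (x ∘ ψ) atTop (𝓝 x₀) ∧ Tendsto (v ∘ ψ) atTop (𝓝 0) := by
  obtain ⟨hβ0, hβ1⟩ := hβ
  have hg := hf.continuous_gradient
  have hG : ∀ k, ⟪gradient f (x k), v k⟫ ≤ 0 := fun k => by
    nlinarith [hdesc k, sq_nonneg ‖v k‖]
  have hv : ∀ k, ‖v k‖ ≤ C * ‖gradient f (x k)‖ := fun k =>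
    norm_le_mul_norm_of_sq_le_mul_neg_inner hC.le (hdesc k)
  have hlamG : Tendsto (fun k => lam k * ⟪gradient f (x k), v k⟫) atTop (𝓝 0) :=
    tendsto_zero_of_le_add_mul_of_mapClusterPt hf.continuous hβ0
      (fun k => mul_nonpos_of_nonneg_of_nonpos (hlam k).1.le (hG k))
      (fun k => (harmijo k).trans_eq (by ring)) hacc
  obtain ⟨φ, hφ, hxφ⟩ := hacc.tendsto_subseq
  obtain ⟨R, hR⟩ := ((hg.tendsto x₀).comp hxφ).norm.bddAbove_range
  have hmem : ∀ n, (v (φ n), lam (φ n)) ∈ Metric.closedBall 0 (C * R) ×ˢ Icc 0 1 := fun n =>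
    ⟨by simpa using (hv _).trans (mul_le_mul_of_nonneg_left (hR ⟨n, rfl⟩) hC.le),
      Ioc_subset_Icc_self (hlam _)⟩
  obtain ⟨⟨v₀, lam₀⟩, -, σ, hσ, hlim⟩ :=
    ((isCompact_closedBall _ _).prod isCompact_Icc).tendsto_subseq hmem
  have hxψ : Tendsto (x ∘ (φ ∘ σ)) atTop (𝓝 x₀) := hxφ.comp hσ.tendsto_atTop
  have hvψ : Tendsto (v ∘ (φ ∘ σ)) atTop (𝓝 v₀) := (continuous_fst.tendsto _).comp hlim
  have hlamψ : Tendsto (lam ∘ (φ ∘ σ)) atTop (𝓝 lam₀) := (continuous_snd.tendsto _).comp hlim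
  have hG₀ : 0 ≤ ⟪gradient f x₀, v₀⟫ :=
    inner_gradient_nonneg_of_backtracking hf hβ1 hγ hxψ hvψ hlamψ (fun _ => (hlam _).1)
      (hlamG.comp (hφ.comp hσ).tendsto_atTop) fun _ => hback _
  have hnorm₀ : ‖v₀‖ ^ 2 ≤ C * -⟪gradient f x₀, v₀⟫ :=
    le_of_tendsto_of_tendsto' (hvψ.norm.pow 2)
      ((((hg.tendsto x₀).comp hxψ).inner hvψ).neg.const_mul C) fun _ => hdesc _
  have hv₀ : v₀ = 0 := by
    rw [← norm_eq_zero]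
    nlinarith [norm_nonneg v₀]
  exact ⟨φ ∘ σ, hφ.comp hσ, hxψ, hv₀ ▸ hvψ⟩

end LineSearch

theorem sgp_accumulation_points_are_stationary_general
    (p : ℕ)
    (Ω : Set (EuclideanSpace ℝ (Fin p)))
    (hΩconv : Convex ℝ Ω)
    (f : EuclideanSpace ℝ (Fin p) → ℝ) (hf : ContDiff ℝ 1 f)
    (β γ : ℝ) (hβ : β ∈ Set.Ioo (0:ℝ) 1) (hγ : γ ∈ Set.Ioo (0:ℝ) 1)
    (αmin αmax Lmin Lmax : ℝ)
    (hαmin : 0 < αmin) (hαminmax : αmin ≤ αmax)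
    (hLmin : 0 < Lmin) (hLminmax : Lmin ≤ Lmax)
    (x z : ℕ → EuclideanSpace ℝ (Fin p))
    (α : ℕ → ℝ) (d : ℕ → Fin p → ℝ) (lam : ℕ → ℝ)
    (hα : ∀ k, α k ∈ Set.Icc αmin αmax)
    (hd : ∀ k i, d k i ∈ Set.Icc Lmin Lmax)
    (hlam : ∀ k, lam k ∈ Set.Ioc (0:ℝ) 1)
    (hx0 : x 0 ∈ Ω)
    -- z^(k) is the scaled projection of x^(k) - α_k D_k ∇f(x^(k)) onto Ω
    (hzmem : ∀ k, z k ∈ Ω)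
    (hzmin : ∀ k, ∀ y ∈ Ω,
      (∑ i, (z k i - (x k i - α k * d k i * gradient f (x k) i))^2 / d k i) ≤
      (∑ i, (y i - (x k i - α k * d k i * gradient f (x k) i))^2 / d k i))
    -- Armijo sufficient decrease condition
    (hArmijo : ∀ k,
      f (x k + lam k • (z k - x k)) ≤
        f (x k) + β * lam k * ∑ i, gradient f (x k) i * (z k i - x k i))
    -- λ_k is produced by backtracking with reduction factor γ
    (hbacktrack : ∀ k, lam k = 1 ∨
      f (x k + (lam k / γ) • (z k - x k)) >
        f (x k) + β * (lam k / γ) * ∑ i, gradient f (x k) i * (z k i - x k i))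
    -- update rule
    (hupdate : ∀ k, x (k + 1) = x k + lam k • (z k - x k))
    -- x* is an accumulation point of the sequence (x^(k))
    (xstar : EuclideanSpace ℝ (Fin p))
    (hacc : MapClusterPt xstar Filter.atTop x) :
    ∀ y ∈ Ω, 0 ≤ ∑ i, gradient f xstar i * (y i - xstar i) := by
  simp only [EuclideanSpace.sum_mul_sub_eq_inner] at hArmijo hbacktrack ⊢
  have hdpos : ∀ k i, 0 < d k i := fun k i => hLmin.trans_le (hd k i).1
  have hxΩ : ∀ k, x k ∈ Ω := by
    intro k
    induction k with
    | zero => exact hx0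
    | succ k ih =>
      rw [hupdate k]
      exact hΩconv.add_smul_sub_mem ih (hzmem k) (Ioc_subset_Icc_self (hlam k))
  have hvi : ∀ k, ∀ y ∈ Ω,
      0 ≤ ∑ i, (z k i - x k i) * (y i - z k i) / d k i + α k * ⟪gradient f (x k), y - z k⟫ :=
    fun k _ => hΩconv.sgp_variational_ineq (hdpos k) (hzmem k) (hzmin k)
  obtain ⟨ψ, -, hxψ, hvψ⟩ := exists_subseq_tendsto_of_armijo_backtracking hf hβ hγ.1
    (mul_pos (hαmin.trans_le hαminmax) (hLmin.trans_le hLminmax)) hlam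
    (fun k => norm_sq_le_of_sgp_variational_ineq (hvi k) (hxΩ k) (hdpos k) (fun i => (hd k i).2)
      (hLmin.le.trans hLminmax) (hαmin.trans_le (hα k).1) (hα k).2)
    (fun k => hupdate k ▸ hArmijo k) hbacktrack hacc
  have hzψ : Tendsto (fun n => z (ψ n)) atTop (𝓝 xstar) := by simpa using hxψ.add hvψ
  intro y hy
  have hlower : Tendsto (fun n => -(‖z (ψ n) - x (ψ n)‖ * ‖y - z (ψ n)‖ / (αmin * Lmin)))
      atTop (𝓝 0) := by
    simpa using ((hvψ.norm.mul (tendsto_const_nhds.sub hzψ).norm).div_const _).neg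
  have hinner : Tendsto (fun n => ⟪gradient f (x (ψ n)), y - z (ψ n)⟫) atTop
      (𝓝 ⟪gradient f xstar, y - xstar⟫) :=
    ((hf.continuous_gradient.tendsto xstar).comp hxψ).inner (tendsto_const_nhds.sub hzψ)
  exact le_of_tendsto_of_tendsto' hlower hinner fun n =>
    neg_le_inner_of_sgp_variational_ineq (hvi (ψ n)) hy hLmin (fun i => (hd _ i).1) hαmin (hα _).1

/-- Convergence of the scaled gradient projection (SGP) method: every accumulation
point of the sequence of iterates is a constrained stationary point. -/
theorem sgp_accumulation_points_are_stationary
    (p : ℕ) (hp : 0 < p)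
    (Ω : Set (EuclideanSpace ℝ (Fin p)))
    (hΩne : Ω.Nonempty) (hΩclosed : IsClosed Ω) (hΩconv : Convex ℝ Ω)
    (f : EuclideanSpace ℝ (Fin p) → ℝ) (hf : ContDiff ℝ 1 f)
    (β γ : ℝ) (hβ : β ∈ Set.Ioo (0:ℝ) 1) (hγ : γ ∈ Set.Ioo (0:ℝ) 1)
    (αmin αmax Lmin Lmax : ℝ)
    (hαmin : 0 < αmin) (hαminmax : αmin ≤ αmax)
    (hLmin : 0 < Lmin) (hLminmax : Lmin ≤ Lmax)
    (x z : ℕ → EuclideanSpace ℝ (Fin p))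
    (α : ℕ → ℝ) (d : ℕ → Fin p → ℝ) (lam : ℕ → ℝ)
    (hα : ∀ k, α k ∈ Set.Icc αmin αmax)
    (hd : ∀ k i, d k i ∈ Set.Icc Lmin Lmax)
    (hlam : ∀ k, lam k ∈ Set.Ioc (0:ℝ) 1)
    (hx0 : x 0 ∈ Ω)
    -- z^(k) is the scaled projection of x^(k) - α_k D_k ∇f(x^(k)) onto Ω
    (hzmem : ∀ k, z k ∈ Ω)
    (hzmin : ∀ k, ∀ y ∈ Ω,
      (∑ i, (z k i - (x k i - α k * d k i * gradient f (x k) i))^2 / d k i) ≤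
      (∑ i, (y i - (x k i - α k * d k i * gradient f (x k) i))^2 / d k i))
    -- Armijo sufficient decrease condition
    (hArmijo : ∀ k,
      f (x k + lam k • (z k - x k)) ≤
        f (x k) + β * lam k * ∑ i, gradient f (x k) i * (z k i - x k i))
    -- λ_k is produced by backtracking with reduction factor γ
    (hbacktrack : ∀ k, lam k = 1 ∨
      f (x k + (lam k / γ) • (z k - x k)) >
        f (x k) + β * (lam k / γ) * ∑ i, gradient f (x k) i * (z k i - x k i))
    -- update rule
    (hupdate : ∀ k, x (k + 1) = x k + lam k • (z k - x k))
    -- x* is an accumulation point of the sequence (x^(k))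
    (xstar : EuclideanSpace ℝ (Fin p))
    (hacc : MapClusterPt xstar Filter.atTop x) :
    ∀ y ∈ Ω, 0 ≤ ∑ i, gradient f xstar i * (y i - xstar i) :=
  sgp_accumulation_points_are_stationary_general p Ω hΩconv f hf β γ hβ hγ αmin αmax Lmin Lmax hαmin
    hαminmax hLmin hLminmax x z α d lam hα hd hlam hx0 hzmem hzmin hArmijo hbacktrack hupdate xstar
    hacc
end

section
/- Let p be a positive integer, Ω ⊆ ℝ^p a nonempty closed convex set, x ∈ Ω, g ∈ ℝ^p, α > 0, and d ∈ ℝ^p a vector with d_i > 0 for all i. Let w ∈ ℝ^p be given by w_i = x_i − α d_i g_i, and let z be the point of Ω minimizing y ↦ Σ_i (y_i − w_i)²/d_i over Ω. Then g·(z − x) ≤ −(1/α) Σ_i (z_i − x_i)²/d_i. In particular, if z ≠ x then g·(z − x) < 0, i.e. z − x is a descent direction for any function whose gradient at x is g. -/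
/-!
Along the segment from the projection `z` towards `x ∈ Ω` the weighted squared distance to `w`
is a quadratic in the step length, so minimality of `z` forces its slope at `z` to be
nonnegative: `∑ (z i - w i) (x i - z i) / d i ≥ 0`. Since `z i - w i = (z i - x i) + α d i g i`,
this says `α ∑ g i (z i - x i) + ∑ (z i - x i)² / d i ≤ 0`.
-/

open Finset Filter Topology

lemma nonneg_of_forall_Ioc_mul_add_sq_mul_nonneg {a b : ℝ}
    (h : ∀ t ∈ Set.Ioc (0 : ℝ) 1, 0 ≤ t * a + t ^ 2 * b) : 0 ≤ a := by
  have hlim : Tendsto (fun t : ℝ => a + t * b) (𝓝[>] 0) (𝓝 a) := by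
    have hcont : Continuous fun t : ℝ => a + t * b := by fun_prop
    simpa using (hcont.tendsto 0).mono_left nhdsWithin_le_nhds
  refine ge_of_tendsto hlim ?_
  filter_upwards [Ioo_mem_nhdsGT one_pos] with t ht
  have hprod : 0 ≤ t * (a + t * b) := by linarith [h t ⟨ht.1, ht.2.le⟩]
  exact nonneg_of_mul_nonneg_right hprod ht.1

section WeightedProjection

variable {ι : Type*} [Fintype ι]

lemma sum_sq_div_convexComb_sub_eq (d w z y : ι → ℝ) (t : ℝ) :
    ∑ i, ((1 - t) * z i + t * y i - w i) ^ 2 / d i =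
      ∑ i, (z i - w i) ^ 2 / d i +
        (t * (2 * ∑ i, (z i - w i) * (y i - z i) / d i) + t ^ 2 * ∑ i, (y i - z i) ^ 2 / d i) := by
  simp only [mul_sum, ← sum_add_distrib]
  exact sum_congr rfl fun i _ => by ring

lemma sum_mul_sub_div_nonneg_of_isMinOn {Ω : Set (ι → ℝ)} (hΩ : Convex ℝ Ω) {d w z y : ι → ℝ}
    (hmin : IsMinOn (fun y => ∑ i, (y i - w i) ^ 2 / d i) Ω z) (hz : z ∈ Ω) (hy : y ∈ Ω) :
    0 ≤ ∑ i, (z i - w i) * (y i - z i) / d i := by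
  suffices h : 0 ≤ 2 * ∑ i, (z i - w i) * (y i - z i) / d i by linarith
  refine nonneg_of_forall_Ioc_mul_add_sq_mul_nonneg (b := ∑ i, (y i - z i) ^ 2 / d i) ?_
  intro t ht
  have hseg : (1 - t) • z + t • y ∈ Ω := hΩ hz hy (by linarith [ht.2]) ht.1.le (by ring)
  have hle := isMinOn_iff.1 hmin _ hseg
  simp only [Pi.add_apply, Pi.smul_apply, smul_eq_mul, sum_sq_div_convexComb_sub_eq] at hle
  linarith

lemma sum_sq_div_pos {d v : ι → ℝ} (hd : ∀ i, 0 < d i) (hv : v ≠ 0) :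
    0 < ∑ i, v i ^ 2 / d i := by
  obtain ⟨i, hi⟩ := Function.ne_iff.1 hv
  exact sum_pos' (fun j _ => div_nonneg (sq_nonneg _) (hd j).le)
    ⟨i, mem_univ i, div_pos (sq_pos_of_ne_zero hi) (hd i)⟩

end WeightedProjection

theorem scaled_projection_descent_direction_general
    (p : ℕ)
    (Ω : Set (Fin p → ℝ))
    (hΩconv : Convex ℝ Ω)
    (x : Fin p → ℝ) (hx : x ∈ Ω)
    (g : Fin p → ℝ) (α : ℝ) (hα : 0 < α)
    (d : Fin p → ℝ) (hd : ∀ i, 0 < d i)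
    (w : Fin p → ℝ) (hw : ∀ i, w i = x i - α * d i * g i)
    (z : Fin p → ℝ) (hzmem : z ∈ Ω)
    (hzmin : ∀ y ∈ Ω, (∑ i, (z i - w i)^2 / d i) ≤ ∑ i, (y i - w i)^2 / d i) :
    (∑ i, g i * (z i - x i)) ≤ -(1/α) * ∑ i, (z i - x i)^2 / d i ∧
    (z ≠ x → (∑ i, g i * (z i - x i)) < 0) := by
  have hslope := sum_mul_sub_div_nonneg_of_isMinOn hΩconv (isMinOn_iff.2 hzmin) hzmem hx
  have hsplit : ∑ i, (z i - w i) * (x i - z i) / d i =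
      -∑ i, (z i - x i) ^ 2 / d i - α * ∑ i, g i * (z i - x i) := by
    rw [mul_sum, ← sum_neg_distrib, ← sum_sub_distrib]
    refine sum_congr rfl fun i _ => ?_
    rw [hw i]
    field_simp [(hd i).ne']
    ring
  have hbound : ∑ i, g i * (z i - x i) ≤ -(1/α) * ∑ i, (z i - x i) ^ 2 / d i := by
    rw [neg_mul, one_div_mul_eq_div, le_neg, div_le_iff₀ hα]
    linarith
  refine ⟨hbound, fun hne => hbound.trans_lt ?_⟩
  have hpos := sum_sq_div_pos (v := z - x) hd (sub_ne_zero.2 hne)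
  simp only [Pi.sub_apply] at hpos
  rw [neg_mul]
  exact neg_neg_of_pos (mul_pos (one_div_pos.2 hα) hpos)

/-- The scaled gradient projection step produces a descent direction. -/
theorem scaled_projection_descent_direction
    (p : ℕ) (hp : 0 < p)
    (Ω : Set (Fin p → ℝ))
    (hΩne : Ω.Nonempty) (hΩclosed : IsClosed Ω) (hΩconv : Convex ℝ Ω)
    (x : Fin p → ℝ) (hx : x ∈ Ω)
    (g : Fin p → ℝ) (α : ℝ) (hα : 0 < α)
    (d : Fin p → ℝ) (hd : ∀ i, 0 < d i)
    (w : Fin p → ℝ) (hw : ∀ i, w i = x i - α * d i * g i)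
    (z : Fin p → ℝ) (hzmem : z ∈ Ω)
    (hzmin : ∀ y ∈ Ω, (∑ i, (z i - w i)^2 / d i) ≤ ∑ i, (y i - w i)^2 / d i) :
    (∑ i, g i * (z i - x i)) ≤ -(1/α) * ∑ i, (z i - x i)^2 / d i ∧
    (z ≠ x → (∑ i, g i * (z i - x i)) < 0) :=
  scaled_projection_descent_direction_general p Ω hΩconv x hx g α hα d hd w hw z hzmem hzmin
end
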